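/- arXiv:1907.04015 — 5 statements merged into one kernel-verified Lean document; each statement's English description precedes it below -/
import Mathlib

section
/- Let D = ℝ, ϱ(x) = (σ√(2π))^{-1} exp(−x²/(2σ²)), ψ(x) = exp(−|x|/λ) with σ, λ > 0, so that ω = ϱ/ψ, and κ_a(x) = exp(−a|x|) with a > 0. Let r be a positive integer, 1 ≤ q < p ≤ ∞, and α = r − 1/p + 1/q (so α > r). Then FCTR(p,q,ω,κ_a) = ((1/(aσ))·√(2α/π))^α · (a²πσ²(α−r)/(2α²))^{(α−r)/2} · exp((σ²/2)·((ar/α + 1/λ)² − 1/λ²)) · [1 + erf(σ(ar/α + 1/λ)/√(2(α−r)))]^{α−r} / [1 + erf(σ/(λ√(2α)))]^α. -/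
open MeasureTheory Real Set
open scoped ENNReal

/-- The error function `erf(z) = (2/√π)∫₀^z e^{−t²} dt`. -/
noncomputable def erf (z : ℝ) : ℝ := 2 / Real.sqrt π * ∫ t in (0:ℝ)..z, Real.exp (-t ^ 2)

/-! Every integral in the ratio is a Gaussian integral against `e^{c|x|}`. Raising
`e^{-x²/(2σ²) + c|x|}` to the power `1/γ` multiplies the variance by `γ` and divides `c` by `γ`, and
on the half-line completing the square turns `∫_{x>0} e^{-x²/(2s²) + bx}` into the Gaussian tail
`s√2 · e^{b²s²/2} · (√π/2)(1 + erf (bs/√2))`. The integrand of `E_p^q` has the same shape because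
`κ^{1/α} (ω/κ)^{1/β} = (ω κ^{-r/α})^{1/β}` when `α = r + β`, and the normalising constant
`(σ√(2π))⁻¹` of `ω` enters the numerator and the denominator with the same power, so it cancels. -/

lemma integrable_exp_neg_sq : Integrable (fun t : ℝ => exp (-t ^ 2)) := by
  simpa using integrable_exp_neg_mul_sq one_pos

lemma integral_comp_add_right_Ioi {E : Type*} [NormedAddCommGroup E] [NormedSpace ℝ E]
    (g : ℝ → E) (a c : ℝ) :
    ∫ x in Ioi a, g (x + c) = ∫ x in Ioi (a + c), g x := by
  rw [← integral_indicator measurableSet_Ioi, ← integral_indicator measurableSet_Ioi,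
    ← integral_add_right_eq_self (fun x => (Ioi (a + c)).indicator g x) c]
  congr 1
  funext x
  simp [indicator_apply]

lemma integral_Iic_exp_neg_sq (z : ℝ) :
    ∫ t in Iic z, exp (-t ^ 2) = √π / 2 * (1 + erf z) := by
  have half : ∫ t in Iic (0 : ℝ), exp (-t ^ 2) = √π / 2 := by
    rw [← neg_zero, ← integral_comp_neg_Ioi]
    simpa using integral_gaussian_Ioi 1
  have split : (∫ t in Iic z, exp (-t ^ 2)) - ∫ t in Iic (0 : ℝ), exp (-t ^ 2)
      = ∫ t in (0 : ℝ)..z, exp (-t ^ 2) :=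
    intervalIntegral.integral_Iic_sub_Iic integrable_exp_neg_sq.integrableOn
      integrable_exp_neg_sq.integrableOn
  have hπ : √π ≠ 0 := by positivity
  rw [erf, ← split, half]
  field_simp
  ring

lemma integral_Ioi_neg_exp_neg_sq (z : ℝ) :
    ∫ t in Ioi (-z), exp (-t ^ 2) = √π / 2 * (1 + erf z) := by
  rw [← integral_Iic_exp_neg_sq, ← integral_comp_neg_Iic]
  simp

lemma one_add_erf_pos (z : ℝ) : 0 < 1 + erf z := by
  have h : 0 < ∫ t in Iic z, exp (-t ^ 2) := by
    rw [setIntegral_pos_iff_support_of_nonneg_ae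
      (Filter.Eventually.of_forall fun t => (exp_pos _).le) integrable_exp_neg_sq.integrableOn]
    simp [Function.support, (exp_pos _).ne']
  rw [integral_Iic_exp_neg_sq] at h
  exact pos_of_mul_pos_right h (by positivity)

lemma integral_exp_neg_mul_abs {c : ℝ} (hc : 0 < c) :
    ∫ x : ℝ, exp (-(c * |x|)) = 2 / c := by
  rw [integral_comp_abs (f := fun t => exp (-(c * t)))]
  have h := integral_comp_mul_left_Ioi (fun x => exp (-x)) 0 hc
  simp only [mul_zero, smul_eq_mul, integral_exp_neg_Ioi_zero] at h
  rw [h, mul_one, div_eq_mul_inv]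

lemma integral_exp_neg_mul_abs_rpow {c γ : ℝ} (hc : 0 < c) (hγ : 0 < γ) :
    ∫ x : ℝ, exp (-(c * |x|)) ^ (1 / γ) = 2 * γ / c := by
  have hpow : ∀ x : ℝ, exp (-(c * |x|)) ^ (1 / γ) = exp (-(c / γ * |x|)) := by
    intro x
    rw [← exp_mul]
    ring_nf
  simp only [hpow]
  rw [integral_exp_neg_mul_abs (by positivity)]
  field_simp

lemma integral_Ioi_exp_neg_sq_div_add_mul (s b : ℝ) (hs : 0 < s) :
    ∫ x in Ioi (0 : ℝ), exp (-x ^ 2 / (2 * s ^ 2) + b * x)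
      = s * √2 * (√π / 2) * exp (b ^ 2 * s ^ 2 / 2) * (1 + erf (b * s / √2)) := by
  have hk : (0 : ℝ) < (s * √2)⁻¹ := by positivity
  have h2 : √2 ^ 2 = 2 := sq_sqrt zero_le_two
  have square : ∀ x : ℝ, exp (-x ^ 2 / (2 * s ^ 2) + b * x)
      = exp (b ^ 2 * s ^ 2 / 2) * exp (-(((x + -(b * s ^ 2)) * (s * √2)⁻¹) ^ 2)) := by
    intro x
    rw [← exp_add]
    congr 1
    field_simp
    rw [h2]
    ring
  rw [setIntegral_congr_fun measurableSet_Ioi (fun x _ => square x), integral_const_mul,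
    integral_comp_add_right_Ioi (fun y => exp (-((y * (s * √2)⁻¹) ^ 2))) 0 (-(b * s ^ 2)),
    zero_add, integral_comp_mul_right_Ioi (fun y => exp (-(y ^ 2))) _ hk,
    show -(b * s ^ 2) * (s * √2)⁻¹ = -(b * s / √2) by field_simp,
    integral_Ioi_neg_exp_neg_sq, smul_eq_mul, inv_inv]
  ring

lemma integral_exp_neg_sq_div_add_mul_abs (s b : ℝ) (hs : 0 < s) :
    ∫ x : ℝ, exp (-x ^ 2 / (2 * s ^ 2) + b * |x|)
      = s * √(2 * π) * exp (b ^ 2 * s ^ 2 / 2) * (1 + erf (b * s / √2)) := by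
  let f := fun t : ℝ => exp (-t ^ 2 / (2 * s ^ 2) + b * t)
  calc ∫ x : ℝ, exp (-x ^ 2 / (2 * s ^ 2) + b * |x|) = ∫ x : ℝ, f |x| := by simp [f]
    _ = _ := by
      rw [integral_comp_abs, integral_Ioi_exp_neg_sq_div_add_mul s b hs, sqrt_mul zero_le_two]
      ring

lemma integral_mul_exp_neg_sq_div_add_mul_abs_rpow {C : ℝ} (σ c γ : ℝ) (hC : 0 ≤ C)
    (hσ : 0 < σ) (hγ : 0 < γ) :
    ∫ x : ℝ, (C * exp (-x ^ 2 / (2 * σ ^ 2) + c * |x|)) ^ (1 / γ)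
      = C ^ (1 / γ) * (σ * √(2 * π * γ) * exp (σ ^ 2 * c ^ 2 / (2 * γ))
          * (1 + erf (σ * c / √(2 * γ)))) := by
  have hsq : (σ * √γ) ^ 2 = σ ^ 2 * γ := by rw [mul_pow, sq_sqrt hγ.le]
  have hpow : ∀ x : ℝ, (C * exp (-x ^ 2 / (2 * σ ^ 2) + c * |x|)) ^ (1 / γ)
      = C ^ (1 / γ) * exp (-x ^ 2 / (2 * (σ * √γ) ^ 2) + c / γ * |x|) := by
    intro x
    rw [mul_rpow hC (exp_pos _).le, ← exp_mul, hsq]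
    congr 2
    field_simp
  simp only [hpow]
  rw [integral_const_mul, integral_exp_neg_sq_div_add_mul_abs _ _ (by positivity), hsq,
    sqrt_mul (by positivity) γ, sqrt_mul zero_le_two γ]
  have hexp : (c / γ) ^ 2 * (σ ^ 2 * γ) / 2 = σ ^ 2 * c ^ 2 / (2 * γ) := by
    field_simp
  have herf : c / γ * (σ * √γ) / √2 = σ * c / (√2 * √γ) := by
    have : √γ ^ 2 = γ := sq_sqrt hγ.le
    field_simp
    rw [this]
  rw [hexp, herf]
  ring

lemma rpow_mul_div_rpow {k w r α β : ℝ} (hk : 0 < k) (hw : 0 ≤ w) (hα : α ≠ 0) (hβ : β ≠ 0)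
    (h : α = r + β) :
    k ^ (1 / α) * (w / k) ^ (1 / β) = (w * k ^ (-(r / α))) ^ (1 / β) := by
  rw [div_eq_mul_inv w, mul_rpow hw (by positivity), mul_rpow hw (by positivity),
    inv_rpow hk.le, ← rpow_neg hk.le, ← rpow_mul hk.le, mul_left_comm, ← rpow_add hk]
  congr 2
  field_simp
  rw [h]
  ring

lemma rpow_div_mul_rpow_normalizer_cancel {A C G₁ G₂ α β : ℝ} (hA : 0 < A) (hC : 0 < C)
    (hG₁ : 0 < G₁) (hG₂ : 0 < G₂) (hα : α ≠ 0) (hβ : β ≠ 0) :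
    A ^ α / (C ^ (1 / α) * G₁) ^ α * (A⁻¹ * (C ^ (1 / β) * G₂)) ^ β
      = A ^ (α - β) * G₂ ^ β / G₁ ^ α := by
  rw [mul_rpow (by positivity) hG₁.le, mul_rpow (by positivity) (by positivity),
    mul_rpow (by positivity) hG₂.le, one_div, one_div, rpow_inv_rpow hC.le hα,
    rpow_inv_rpow hC.le hβ, inv_rpow hA.le, rpow_sub hA]
  field_simp

lemma gaussian_prefactor_eq {a σ α β : ℝ} (ha : 0 < a) (hσ : 0 < σ) (hα : 0 < α)
    (hβ : 0 < β) :
    (2 * α / a) ^ (α - β) * (σ * √(2 * π * β)) ^ β / (σ * √(2 * π * α)) ^ α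
      = (1 / (a * σ) * √(2 * α / π)) ^ α * (a ^ 2 * π * σ ^ 2 * β / (2 * α ^ 2)) ^ (β / 2) := by
  have hA : 0 < 2 * α / a := by positivity
  have h₁ : 1 / (a * σ) * √(2 * α / π) = 2 * α / a / (σ * √(2 * π * α)) := by
    have hsqrt : √(2 * α / π) * √(2 * π * α) = 2 * α := by
      rw [← sqrt_mul (by positivity), show 2 * α / π * (2 * π * α) = (2 * α) ^ 2 by
        field_simp, sqrt_sq (by positivity)]
    rw [eq_div_iff (by positivity), show 1 / (a * σ) * √(2 * α / π) * (σ * √(2 * π * α))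
      = √(2 * α / π) * √(2 * π * α) / a by field_simp, hsqrt]
  have h₂ : √(a ^ 2 * π * σ ^ 2 * β / (2 * α ^ 2)) = σ * √(2 * π * β) / (2 * α / a) := by
    rw [← sqrt_sq (by positivity : 0 ≤ σ * √(2 * π * β) / (2 * α / a)), div_pow, mul_pow,
      sq_sqrt (by positivity)]
    congr 1
    field_simp
  rw [rpow_div_two_eq_sqrt _ (by positivity), h₁, h₂, rpow_sub hA,
    div_rpow hA.le (by positivity), div_rpow (by positivity) hA.le]
  field_simp

lemma gaussian_closed_form_ratio {a σ α β c₁ c₂ E₁ E₂ : ℝ} (ha : 0 < a) (hσ : 0 < σ)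
    (hα : 0 < α) (hβ : 0 < β) (hE₁ : 0 < E₁) (hE₂ : 0 < E₂) :
    (2 * α / a) ^ (α - β) * (σ * √(2 * π * β) * exp (σ ^ 2 * c₂ ^ 2 / (2 * β)) * E₂) ^ β
        / (σ * √(2 * π * α) * exp (σ ^ 2 * c₁ ^ 2 / (2 * α)) * E₁) ^ α
      = (1 / (a * σ) * √(2 * α / π)) ^ α * (a ^ 2 * π * σ ^ 2 * β / (2 * α ^ 2)) ^ (β / 2)
          * exp (σ ^ 2 / 2 * (c₂ ^ 2 - c₁ ^ 2)) * E₂ ^ β / E₁ ^ α := by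
  rw [mul_rpow (by positivity) hE₂.le, mul_rpow (by positivity) (exp_pos _).le,
    mul_rpow (by positivity) hE₁.le, mul_rpow (by positivity) (exp_pos _).le,
    ← exp_mul, ← exp_mul, ← gaussian_prefactor_eq ha hσ hα hβ,
    show σ ^ 2 / 2 * (c₂ ^ 2 - c₁ ^ 2)
      = σ ^ 2 * c₂ ^ 2 / (2 * β) * β - σ ^ 2 * c₁ ^ 2 / (2 * α) * α by field_simp,
    exp_sub]
  field_simp

lemma toReal_one_div_sub_toReal_one_div_pos {p q : ℝ≥0∞} (hq : q ≠ 0) (hqp : q < p) :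
    0 < (1 / q).toReal - (1 / p).toReal := by
  rw [sub_pos]
  refine ENNReal.toReal_strict_mono (by simpa using hq) ?_
  simpa only [one_div] using ENNReal.inv_lt_inv.mpr hqp

theorem stmt_5_general (σ lam a : ℝ) (hσ : 0 < σ) (ha : 0 < a)
    (r : ℕ) (p q : ℝ≥0∞) (hq1 : 1 ≤ q) (hqp : q < p)
    (α β : ℝ) (hα : α = r - (1 / p).toReal + (1 / q).toReal)
    (hβ : β = (1 / q).toReal - (1 / p).toReal)
    (ω κ : ℝ → ℝ)
    (hω : ω = fun x : ℝ =>
      (σ * Real.sqrt (2 * π))⁻¹ * Real.exp (-x ^ 2 / (2 * σ ^ 2) + |x| / lam))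
    (hκ : κ = fun x : ℝ => Real.exp (-(a * |x|))) :
    (∫ x : ℝ, κ x ^ (1 / α)) ^ α / (∫ x : ℝ, ω x ^ (1 / α)) ^ α
        * (∫ x : ℝ, κ x ^ (1 / α) / (∫ y : ℝ, κ y ^ (1 / α))
            * (ω x / κ x) ^ (1 / β)) ^ β
      = (1 / (a * σ) * Real.sqrt (2 * α / π)) ^ α
          * (a ^ 2 * π * σ ^ 2 * (α - r) / (2 * α ^ 2)) ^ ((α - r) / 2)
          * Real.exp (σ ^ 2 / 2 * ((a * r / α + 1 / lam) ^ 2 - 1 / lam ^ 2))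
          * (1 + erf (σ * (a * r / α + 1 / lam) / Real.sqrt (2 * (α - r)))) ^ (α - r)
          / (1 + erf (σ / (lam * Real.sqrt (2 * α)))) ^ α := by
  have hβpos : 0 < β :=
    hβ ▸ toReal_one_div_sub_toReal_one_div_pos (zero_lt_one.trans_le hq1).ne' hqp
  have hαβ : α = r + β := by rw [hα, hβ]; ring
  have hαpos : 0 < α := by rw [hαβ]; positivity
  have hK : 0 < (σ * √(2 * π))⁻¹ := by positivity
  have hω' : ∀ x, ω x = (σ * √(2 * π))⁻¹ * exp (-x ^ 2 / (2 * σ ^ 2) + 1 / lam * |x|) :=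
    fun x => by rw [hω, one_div_mul_eq_div]
  have hA : ∫ x : ℝ, κ x ^ (1 / α) = 2 * α / a := hκ ▸ integral_exp_neg_mul_abs_rpow ha hαpos
  have hE : ∀ x, κ x ^ (1 / α) / (2 * α / a) * (ω x / κ x) ^ (1 / β)
      = (2 * α / a)⁻¹ * ((σ * √(2 * π))⁻¹
        * exp (-x ^ 2 / (2 * σ ^ 2) + (a * r / α + 1 / lam) * |x|)) ^ (1 / β) := by
    intro x
    rw [div_mul_eq_mul_div, div_eq_inv_mul, rpow_mul_div_rpow (by simp [hκ, exp_pos])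
      (by simp [hω']; positivity) hαpos.ne' hβpos.ne' hαβ, hω', hκ, mul_assoc, ← exp_mul,
      ← exp_add]
    ring_nf
  rw [hA]
  simp only [hE]
  simp only [hω']
  rw [integral_const_mul, integral_mul_exp_neg_sq_div_add_mul_abs_rpow _ _ _ hK.le hσ hαpos,
    integral_mul_exp_neg_sq_div_add_mul_abs_rpow _ _ _ hK.le hσ hβpos,
    rpow_div_mul_rpow_normalizer_cancel (by positivity) hK
      (mul_pos (by positivity) (one_add_erf_pos _)) (mul_pos (by positivity) (one_add_erf_pos _))
      hαpos.ne' hβpos.ne',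
    gaussian_closed_form_ratio ha hσ hαpos hβpos (one_add_erf_pos _) (one_add_erf_pos _),
    show α - r = β by rw [hαβ]; ring, one_div_pow, mul_one_div, div_div]

/-- Gaussian `ϱ(x) = (σ√(2π))⁻¹e^{−x²/(2σ²)}`, exponential
`ψ(x) = e^{−|x|/λ}`, so `ω = ϱ/ψ`; quantizer `κ_a(x) = e^{−a|x|}`, `a > 0`;
`r ≥ 1`, `1 ≤ q < p ≤ ∞`, `α = r − 1/p + 1/q` and `β = 1/q − 1/p`.  Then
`FCTR(p,q,ω,κ_a) = (‖κ_a^{1/α}‖₁^α/‖ω^{1/α}‖₁^α)·E_p^q(ω,κ_a)`, with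
`E_p^q(ω,κ_a) = (∫_ℝ (κ_a^{1/α}/‖κ_a^{1/α}‖₁)(ω/κ_a)^{1/β})^β`, equals
`((1/(aσ))√(2α/π))^α (a²πσ²(α−r)/(2α²))^{(α−r)/2}
  exp((σ²/2)((ar/α + 1/λ)² − 1/λ²))
  [1 + erf(σ(ar/α + 1/λ)/√(2(α−r)))]^{α−r} / [1 + erf(σ/(λ√(2α)))]^α`. -/
theorem stmt_5 (σ lam a : ℝ) (hσ : 0 < σ) (hlam : 0 < lam) (ha : 0 < a)
    (r : ℕ) (hr : 0 < r) (p q : ℝ≥0∞) (hq1 : 1 ≤ q) (hqp : q < p)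
    (α β : ℝ) (hα : α = r - (1 / p).toReal + (1 / q).toReal)
    (hβ : β = (1 / q).toReal - (1 / p).toReal)
    (ω κ : ℝ → ℝ)
    (hω : ω = fun x : ℝ =>
      (σ * Real.sqrt (2 * π))⁻¹ * Real.exp (-x ^ 2 / (2 * σ ^ 2) + |x| / lam))
    (hκ : κ = fun x : ℝ => Real.exp (-(a * |x|))) :
    (∫ x : ℝ, κ x ^ (1 / α)) ^ α / (∫ x : ℝ, ω x ^ (1 / α)) ^ α
        * (∫ x : ℝ, κ x ^ (1 / α) / (∫ y : ℝ, κ y ^ (1 / α))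
            * (ω x / κ x) ^ (1 / β)) ^ β
      = (1 / (a * σ) * Real.sqrt (2 * α / π)) ^ α
          * (a ^ 2 * π * σ ^ 2 * (α - r) / (2 * α ^ 2)) ^ ((α - r) / 2)
          * Real.exp (σ ^ 2 / 2 * ((a * r / α + 1 / lam) ^ 2 - 1 / lam ^ 2))
          * (1 + erf (σ * (a * r / α + 1 / lam) / Real.sqrt (2 * (α - r)))) ^ (α - r)
          / (1 + erf (σ / (lam * Real.sqrt (2 * α)))) ^ α :=
  stmt_5_general σ lam a hσ ha r p q hq1 hqp α β hα hβ ω κ hω hκ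
end

section
/- Let D = ℝ, r = 1, p = ∞, q = 1 (so α = 2), ω(x) = (1/√(2π)) exp(−x²/2), and κ_σ(x) = (1/√(2πσ²)) exp(−x²/(2σ²)) for σ² > 0. Then FCTR(∞,1,ω,κ_σ) = (‖κ_σ^{1/2}‖_{L_1}² / ‖ω^{1/2}‖_{L_1}²) · ∫_ℝ (κ_σ(x)^{1/2}/‖κ_σ^{1/2}‖_{L_1}) · (ω(x)/κ_σ(x)) dx equals σ²/√(2σ²−1) if σ² > 1/2, while the integral ∫_ℝ κ_σ(x)^{1/2} (ω(x)/κ_σ(x)) dx diverges (equals +∞) if σ² ≤ 1/2. -/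
open MeasureTheory Real Set
open scoped ENNReal

/-!
Both densities are of the form `c * exp (-β * x ^ 2)`, a family closed under products, quotients
and square roots. Hence `κ^{1/2} * (ω / κ) = c * exp (-(2σ² - 1) / (4σ²) * x ^ 2)` with `c > 0`:
for `σ² > 1/2` every integral in `FCTR` is a Gaussian integral, while for `σ² ≤ 1/2` the
integrand is bounded below by the constant `c`, so its integral over `ℝ` diverges.
-/

noncomputable def scaledGaussian (c β x : ℝ) : ℝ := c * exp (-β * x ^ 2)

section ScaledGaussian

variable {c c₁ c₂ β β₁ β₂ : ℝ}

theorem scaledGaussian_rpow_half (hc : 0 ≤ c) (x : ℝ) :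
    scaledGaussian c β x ^ ((1 : ℝ) / 2) = scaledGaussian (√c) (β / 2) x := by
  rw [scaledGaussian, scaledGaussian, ← sqrt_eq_rpow, sqrt_mul hc, ← exp_half]
  ring_nf

theorem scaledGaussian_mul (x : ℝ) :
    scaledGaussian c₁ β₁ x * scaledGaussian c₂ β₂ x = scaledGaussian (c₁ * c₂) (β₁ + β₂) x := by
  simp only [scaledGaussian, neg_add, add_mul, exp_add]
  ring

theorem scaledGaussian_div (x : ℝ) :
    scaledGaussian c₁ β₁ x / scaledGaussian c₂ β₂ x = scaledGaussian (c₁ / c₂) (β₁ - β₂) x := by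
  rw [scaledGaussian, scaledGaussian, scaledGaussian, mul_div_mul_comm, ← exp_sub]
  ring_nf

theorem integral_scaledGaussian (c β : ℝ) : ∫ x, scaledGaussian c β x = c * √(π / β) := by
  simp only [scaledGaussian, integral_const_mul, integral_gaussian]

theorem lintegral_ofReal_scaledGaussian_eq_top (hc : 0 < c) (hβ : β ≤ 0) :
    ∫⁻ x, ENNReal.ofReal (scaledGaussian c β x) = ⊤ := by
  refine top_le_iff.mp (le_trans ?_ (lintegral_mono fun x =>
    ENNReal.ofReal_le_ofReal (?_ : c ≤ scaledGaussian c β x)))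
  · rw [lintegral_const, Real.volume_univ, ENNReal.mul_top (ENNReal.ofReal_pos.mpr hc).ne']
  · exact le_mul_of_one_le_right hc.le (one_le_exp (by nlinarith [sq_nonneg x]))

end ScaledGaussian

/-- With `r = 1`, `p = ∞`, `q = 1` (so `α = 2`), the standard Gaussian
`ω(x) = (1/√(2π)) e^{−x²/2}` and the Gaussian quantizer
`κ_σ(x) = (1/√(2πσ²)) e^{−x²/(2σ²)}` (parametrized below by `v = σ² > 0`):
`FCTR(∞,1,ω,κ_σ) = (‖κ_σ^{1/2}‖₁²/‖ω^{1/2}‖₁²) ∫_ℝ (κ_σ^{1/2}/‖κ_σ^{1/2}‖₁)(ω/κ_σ)`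
equals `σ²/√(2σ²−1)` if `σ² > 1/2`, while `∫_ℝ κ_σ^{1/2}(ω/κ_σ)` diverges (is `+∞`)
if `σ² ≤ 1/2`. -/
theorem stmt_9 (v : ℝ) (hv : 0 < v) (ω κ : ℝ → ℝ)
    (hω : ω = fun x : ℝ => (Real.sqrt (2 * π))⁻¹ * Real.exp (-x ^ 2 / 2))
    (hκ : κ = fun x : ℝ => (Real.sqrt (2 * π * v))⁻¹ * Real.exp (-x ^ 2 / (2 * v))) :
    (1 / 2 < v →
      (∫ x : ℝ, κ x ^ ((1:ℝ) / 2)) ^ 2 / (∫ x : ℝ, ω x ^ ((1:ℝ) / 2)) ^ 2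
          * ∫ x : ℝ, κ x ^ ((1:ℝ) / 2) / (∫ y : ℝ, κ y ^ ((1:ℝ) / 2)) * (ω x / κ x)
        = v / Real.sqrt (2 * v - 1))
    ∧ (v ≤ 1 / 2 →
        ∫⁻ x : ℝ, ENNReal.ofReal (κ x ^ ((1:ℝ) / 2) * (ω x / κ x)) = ⊤) := by
  set a := (√(2 * π * v))⁻¹
  set b := (√(2 * π))⁻¹
  have ha : 0 < a := by positivity
  have hb : 0 < b := by positivity
  have hω' : ω = scaledGaussian b (1 / 2) := by
    subst hω; funext x; simp only [scaledGaussian]; ring_nf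
  have hκ' : κ = scaledGaussian a (1 / (2 * v)) := by
    subst hκ; funext x; simp only [scaledGaussian]; ring_nf
  have hintegrand : ∀ x, κ x ^ ((1:ℝ) / 2) * (ω x / κ x)
      = scaledGaussian (√a * (b / a)) ((2 * v - 1) / (4 * v)) x := by
    intro x
    rw [hω', hκ', scaledGaussian_rpow_half ha.le, scaledGaussian_div, scaledGaussian_mul]
    congr 1; field_simp; ring
  refine ⟨fun _ => ?_, fun h => ?_⟩
  · simp_rw [div_mul_eq_mul_div _ _ (ω _ / κ _), integral_div, hintegrand, hω', hκ',
      scaledGaussian_rpow_half ha.le, scaledGaussian_rpow_half hb.le, integral_scaledGaussian]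
    have hpv : 0 < 4 * π * v := by positivity
    have eκ : π / (1 / (2 * v) / 2) = 4 * π * v := by field_simp; ring
    have eω : π / (1 / 2 / 2) = 4 * π := by field_simp; ring
    have eE : π / ((2 * v - 1) / (4 * v)) = 4 * π * v / (2 * v - 1) := by field_simp
    rw [eκ, eω, eE, sqrt_div hpv.le, mul_pow, mul_pow, sq_sqrt ha.le, sq_sqrt hb.le,
      sq_sqrt hpv.le, sq_sqrt (by positivity)]
    field_simp
  · simp_rw [hintegrand]
    exact lintegral_ofReal_scaledGaussian_eq_top (by positivity)
      (div_nonpos_of_nonpos_of_nonneg (by linarith) (by linarith))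
end

section
/- Let D = [0,∞), μ ∈ ℝ, σ > 0, and let ω(x) = (x σ√(2π))^{-1} exp(−(ln x − μ)²/(2σ²)) for x > 0 be the log-normal density. For c > 0 let κ_c(x) = 1 for x ∈ [0, e^μ] and κ_c(x) = exp(c(μ − ln x)) for x > e^μ. Then: (i) for c > α one has ‖κ_c^{1/α}‖_{L_1(D)}^α = (c/(c−α))^α e^{αμ}; and (ii) ‖ω/κ_c‖_{L_∞(D)} = (σ√(2π))^{-1} exp(−μ + (σ²/2)·max(1, (c−1)²)). -/
/-! Part (i): on `(0, ∞)` the function `κ_c^{1/α}` equals `1` up to `m = e^μ` and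
`(x / m)^{-c/α}` beyond, whose integral is `m + m α / (c - α)`.

Part (ii): in the variable `u = log x - μ` the ratio `ω / κ_c` is
`(σ√(2π))⁻¹ e^{-μ} e^{φ(u)}` with `φ(u) = -u - u²/(2σ²) + c max(0, u)`, a concave parabola on each
half-line. Completing the square, `φ` peaks at `u = -σ²` with value `σ²/2`, or, when `c > 2`, at
`u = (c - 1)σ²` with value `σ²(c - 1)²/2`. Since the ratio is continuous on `(0, ∞)` and attains
its supremum there, the supremum is also the essential supremum. -/

open MeasureTheory Real Set
open scoped ENNReal Topology

theorem eLpNormEssSup_restrict_eq_of_isGreatest {X E : Type*} [TopologicalSpace X]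
    [MeasurableSpace X] [OpensMeasurableSpace X] [NormedAddCommGroup E] {μ : Measure X}
    [μ.IsOpenPosMeasure] {f : X → E} {U : Set X} {M : ℝ≥0∞} (hU : IsOpen U)
    (hf : ContinuousOn f U) (hM : IsGreatest ((fun x => ‖f x‖ₑ) '' U) M) :
    eLpNormEssSup f (μ.restrict U) = M := by
  obtain ⟨⟨x₀, hx₀, rfl⟩, h_le⟩ := hM
  refine le_antisymm (essSup_le_of_ae_le _ ?_) (not_lt.1 fun h_lt => ?_)
  · exact ae_restrict_of_forall_mem hU.measurableSet fun x hx => h_le ⟨x, hx, rfl⟩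
  · have h_nhds : {x | eLpNormEssSup f (μ.restrict U) < ‖f x‖ₑ} ∩ U ∈ 𝓝 x₀ :=
      Filter.inter_mem ((hf.continuousAt (hU.mem_nhds hx₀)).enorm.eventually (lt_mem_nhds h_lt))
        (hU.mem_nhds hx₀)
    refine (Measure.measure_pos_of_mem_nhds μ h_nhds).ne' (le_antisymm ?_ bot_le)
    exact (Measure.le_restrict_apply _ _).trans (meas_essSup_lt).le

theorem integral_Ioi_ite_le_one_div_rpow {m p : ℝ} (hm : 0 < m) (hp : 1 < p) :
    ∫ x in Ioi 0, (if x ≤ m then 1 else (x / m) ^ (-p)) = m * p / (p - 1) := by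
  have hp' : -p < -1 := by linarith
  have h_near : EqOn (fun x : ℝ => if x ≤ m then 1 else (x / m) ^ (-p)) 1 (Ioc 0 m) :=
    fun x hx => if_pos hx.2
  have h_far : EqOn (fun x : ℝ => if x ≤ m then 1 else (x / m) ^ (-p))
      (fun x => m ^ p * x ^ (-p)) (Ioi m) := by
    intro x hx
    have hx0 : 0 < x := hm.trans hx
    simp only [if_neg (not_le.2 (show m < x from hx))]
    rw [div_rpow hx0.le hm.le, rpow_neg hm.le, div_inv_eq_mul, mul_comm]
  have h_int_near : IntegrableOn (fun x : ℝ => if x ≤ m then 1 else (x / m) ^ (-p)) (Ioc 0 m) :=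
    (integrableOn_const (by simp)).congr_fun h_near.symm measurableSet_Ioc
  have h_int_far : IntegrableOn (fun x : ℝ => if x ≤ m then 1 else (x / m) ^ (-p)) (Ioi m) :=
    IntegrableOn.congr_fun ((integrableOn_Ioi_rpow_of_lt hp' hm).const_mul _) h_far.symm
      measurableSet_Ioi
  rw [← Ioc_union_Ioi_eq_Ioi hm.le,
    setIntegral_union (Ioc_disjoint_Ioi le_rfl) measurableSet_Ioi h_int_near h_int_far,
    setIntegral_congr_fun measurableSet_Ioc h_near, setIntegral_congr_fun measurableSet_Ioi h_far,
    integral_const_mul, integral_Ioi_rpow_of_lt hp' hm]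
  have hmp : m ^ p * m ^ (-p + 1) = m := by
    rw [← rpow_add hm, add_neg_cancel_left, rpow_one]
  have hp1 : p - 1 ≠ 0 := by linarith
  have hp1' : -p + 1 ≠ 0 := by linarith
  simp only [Pi.one_apply, integral_const, MeasurableSet.univ, measureReal_restrict_apply,
    univ_inter, volume_real_Ioc, sub_zero, hm.le, sup_of_le_left, smul_eq_mul, mul_one]
  rw [mul_div_assoc', mul_neg, hmp]
  field_simp
  ring

theorem quantizer_rpow_eq {μ c α x : ℝ} (hx : 0 < x) :
    (if x ≤ exp μ then 1 else exp (c * (μ - log x))) ^ (1 / α)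
      = if x ≤ exp μ then 1 else (x / exp μ) ^ (-(c / α)) := by
  split_ifs
  · exact one_rpow _
  · rw [← exp_mul, rpow_def_of_pos (div_pos hx (exp_pos μ)), log_div hx.ne' (exp_pos μ).ne',
      log_exp]
    ring_nf

theorem integral_Ioi_quantizer_rpow {μ c α : ℝ} (hα : 0 < α) (hαc : α < c) :
    ∫ x in Ioi 0, (if x ≤ exp μ then 1 else exp (c * (μ - log x))) ^ (1 / α)
      = c / (c - α) * exp μ := by
  rw [setIntegral_congr_fun measurableSet_Ioi fun x hx => quantizer_rpow_eq hx,
    integral_Ioi_ite_le_one_div_rpow (exp_pos μ) ((one_lt_div hα).2 hαc)]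
  have : c - α ≠ 0 := by linarith
  field_simp

noncomputable def logRatioProfile (σ c u : ℝ) : ℝ := -u - u ^ 2 / (2 * σ ^ 2) + c * max 0 u

theorem isGreatest_range_logRatioProfile {σ c : ℝ} (hσ : σ ≠ 0) (hc : 0 < c) :
    IsGreatest (range (logRatioProfile σ c))
      (σ ^ 2 / 2 * max 1 ((c - 1) ^ 2)) := by
  have h_sq : ∀ a u : ℝ, a * u - u ^ 2 / (2 * σ ^ 2)
      = σ ^ 2 * a ^ 2 / 2 - (u - a * σ ^ 2) ^ 2 / (2 * σ ^ 2) := by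
    intro a u
    field_simp
    ring
  have h_nonneg : ∀ a u : ℝ, 0 ≤ (u - a * σ ^ 2) ^ 2 / (2 * σ ^ 2) := fun _ _ => by positivity
  have hσ2 : 0 ≤ σ ^ 2 := sq_nonneg σ
  unfold logRatioProfile
  constructor
  · rcases le_or_gt ((c - 1) ^ 2) 1 with h | h
    · refine ⟨-σ ^ 2, ?_⟩
      simp only [max_eq_left h, max_eq_left (neg_nonpos.2 hσ2), mul_zero, add_zero]
      field_simp
      ring
    · have hc2 : 2 < c := by nlinarith
      refine ⟨(c - 1) * σ ^ 2, ?_⟩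
      have hu₀ : 0 ≤ (c - 1) * σ ^ 2 := mul_nonneg (by linarith) hσ2
      simp only [max_eq_right h.le, max_eq_right hu₀]
      field_simp
      ring
  · rintro _ ⟨u, rfl⟩
    rcases le_total u 0 with hu | hu
    · have h_eq := h_sq (-1) u
      have h_gap := h_nonneg (-1) u
      have h_max : σ ^ 2 / 2 ≤ σ ^ 2 / 2 * max 1 ((c - 1) ^ 2) :=
        le_mul_of_one_le_right (by positivity) (le_max_left _ _)
      simp only [max_eq_left hu]
      linarith
    · have h_eq := h_sq (c - 1) u
      have h_gap := h_nonneg (c - 1) u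
      have h_max : σ ^ 2 / 2 * (c - 1) ^ 2 ≤ σ ^ 2 / 2 * max 1 ((c - 1) ^ 2) :=
        mul_le_mul_of_nonneg_left (le_max_right _ _) (by positivity)
      simp only [max_eq_right hu]
      linarith

theorem lognormal_div_quantizer_eq {μ σ c x : ℝ} (hx : 0 < x) :
    (x * σ * √(2 * π))⁻¹ * exp (-(log x - μ) ^ 2 / (2 * σ ^ 2))
        / (if x ≤ exp μ then 1 else exp (c * (μ - log x)))
      = (σ * √(2 * π))⁻¹ * exp (-μ + logRatioProfile σ c (log x - μ)) := by
  have h_quantizer : (if x ≤ exp μ then 1 else exp (c * (μ - log x)))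
      = exp (-(c * max 0 (log x - μ))) := by
    split_ifs with h
    · rw [max_eq_left (sub_nonpos.2 ((log_le_iff_le_exp hx).2 h)), mul_zero, neg_zero, exp_zero]
    · rw [max_eq_right (sub_nonneg.2 ((le_log_iff_exp_le hx).2 (not_le.1 h).le))]
      ring_nf
  have h_inv : x⁻¹ = exp (-log x) := by rw [exp_neg, exp_log hx]
  rw [h_quantizer, mul_assoc, mul_inv, h_inv, logRatioProfile,
    show -μ + (-(log x - μ) - (log x - μ) ^ 2 / (2 * σ ^ 2) + c * max 0 (log x - μ))
      = -log x + -(log x - μ) ^ 2 / (2 * σ ^ 2) - -(c * max 0 (log x - μ)) by ring,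
    exp_sub, exp_add]
  ring

theorem continuousOn_exp_logRatioProfile_log (μ σ c : ℝ) :
    ContinuousOn (fun x => (σ * √(2 * π))⁻¹ * exp (-μ + logRatioProfile σ c (log x - μ)))
      (Ioi 0) := by
  have h_log : ContinuousOn log (Ioi 0) := continuousOn_log.mono fun x hx => ne_of_gt hx
  unfold logRatioProfile
  fun_prop

theorem isGreatest_image_Ioi_enorm_exp_logRatioProfile_log {μ σ c : ℝ} (hσ : 0 < σ)
    (hc : 0 < c) :
    IsGreatest ((fun x => ‖(σ * √(2 * π))⁻¹ * exp (-μ + logRatioProfile σ c (log x - μ))‖ₑ)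
        '' Ioi 0)
      (ENNReal.ofReal ((σ * √(2 * π))⁻¹ * exp (-μ + σ ^ 2 / 2 * max 1 ((c - 1) ^ 2)))) := by
  have h_mono : Monotone fun t => ‖(σ * √(2 * π))⁻¹ * exp (-μ + t)‖ₑ := fun t t' h => by
    dsimp only
    rw [Real.enorm_eq_ofReal (by positivity), Real.enorm_eq_ofReal (by positivity)]
    gcongr
  have h_log : (fun x => log x - μ) '' Ioi 0 = univ :=
    eq_univ_of_forall fun u => ⟨exp (u + μ), exp_pos _, by simp⟩
  have h_greatest := h_mono.map_isGreatest (isGreatest_range_logRatioProfile hσ.ne' hc)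
  rwa [← image_univ, ← h_log, image_image, image_image, Real.enorm_eq_ofReal (by positivity)]
    at h_greatest

/-- Log-normal `ω` on `D = [0,∞)` and the quantizer
`κ_c(x) = 1` for `x ∈ [0, e^μ]`, `κ_c(x) = exp(c(μ − ln x))` for `x > e^μ`.
(i) For `c > α`: `‖κ_c^{1/α}‖_{L₁(D)}^α = (c/(c−α))^α e^{αμ}`.
(ii) `‖ω/κ_c‖_{L_∞(D)} = (σ√(2π))⁻¹ exp(−μ + (σ²/2) max(1,(c−1)²))`. -/
theorem stmt_15 (μ σ : ℝ) (hσ : 0 < σ) (α : ℝ) (hα : 0 < α) (c : ℝ) (hc : 0 < c)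
    (ω κ : ℝ → ℝ)
    (hω : ω = fun x : ℝ =>
      (x * σ * Real.sqrt (2 * π))⁻¹ * Real.exp (-(Real.log x - μ) ^ 2 / (2 * σ ^ 2)))
    (hκ : κ = fun x : ℝ =>
      if x ≤ Real.exp μ then 1 else Real.exp (c * (μ - Real.log x))) :
    (α < c →
      (∫ x in Set.Ioi (0:ℝ), κ x ^ (1 / α)) ^ α = (c / (c - α)) ^ α * Real.exp (α * μ))
    ∧ eLpNorm (fun x => ω x / κ x) ⊤ (volume.restrict (Set.Ioi (0:ℝ)))
        = ENNReal.ofReal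
            ((σ * Real.sqrt (2 * π))⁻¹
              * Real.exp (-μ + σ ^ 2 / 2 * max 1 ((c - 1) ^ 2))) := by
  subst hω hκ
  refine ⟨fun hαc => ?_, ?_⟩
  · rw [integral_Ioi_quantizer_rpow hα hαc,
      mul_rpow (div_pos hc (sub_pos.2 hαc)).le (exp_pos μ).le, ← exp_mul, mul_comm μ α]
  · have h_eq : EqOn (fun x => _ / _)
        (fun x => (σ * √(2 * π))⁻¹ * exp (-μ + logRatioProfile σ c (log x - μ))) (Ioi 0) :=
      fun x hx => lognormal_div_quantizer_eq hx
    rw [eLpNorm_exponent_top]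
    refine eLpNormEssSup_restrict_eq_of_isGreatest isOpen_Ioi
      ((continuousOn_exp_logRatioProfile_log μ σ c).congr h_eq) ?_
    rw [image_congr fun x hx => congrArg enorm (h_eq hx)]
    exact isGreatest_image_Ioi_enorm_exp_logRatioProfile_log hσ hc
end

section
/- Let λ > 0, b ≥ 0, a > 0 with a + b ≤ λ, and let ω(x) = λ e^{λx + b|x|}/(1 + e^{λx})² for x ∈ ℝ, and κ_a(x) = e^{−a|x|}. Then ‖ω/κ_a‖_{L_∞(ℝ)} = (λ/4)·(1 + (a+b)/λ)^{1+(a+b)/λ}·(1 − (a+b)/λ)^{1−(a+b)/λ}, with the convention 0^0 = 1; in particular, if a + b = λ then ‖ω/κ_a‖_{L_∞(ℝ)} = λ. -/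
open MeasureTheory Real Set Filter Topology
open scoped ENNReal

/-! With `t = e^{λx}` and `c = (a + b)/λ`, the quotient `ω/κ_a` is `λ t^{1+c}/(1+t)²` for `x ≥ 0`
and `λ t^{1-c}/(1+t)²` for `x ≤ 0`. Weighted AM–GM gives `t^p/(1+t)² ≤ p^p (2-p)^{2-p}/4`
for `0 ≤ p ≤ 2`, a bound symmetric under `p ↦ 2 - p`, with equality at `t = p/(2-p)`; for `p = 1 + c < 2`
this point lies in the branch `x ≥ 0`, while for `c = 1` the bound `λ` is only approached as `x → ∞`.
As the quotient is continuous and Lebesgue measure charges every nonempty open set, its essential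
supremum is its supremum. -/

theorem Continuous.eLpNorm_top_eq_iSup_enorm {X E : Type*} [TopologicalSpace X]
    [MeasurableSpace X] {μ : Measure X} [μ.IsOpenPosMeasure] [NormedAddCommGroup E]
    {f : X → E} (hf : Continuous f) : eLpNorm f ⊤ μ = ⨆ x, ‖f x‖ₑ := by
  rw [eLpNorm_exponent_top, eLpNormEssSup, ← iSup_eq_essSup]
  intro x a hx
  exact (isOpen_lt continuous_const hf.enorm).measure_ne_zero μ ⟨x, hx⟩

theorem Continuous.eLpNorm_top_eq_ofReal_of_isLUB {X : Type*} [TopologicalSpace X]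
    [MeasurableSpace X] {μ : Measure X} [μ.IsOpenPosMeasure] {f : X → ℝ} {M : ℝ}
    (hf : Continuous f) (hf0 : 0 ≤ f) (hM : IsLUB (range f) M) :
    eLpNorm f ⊤ μ = ENNReal.ofReal M := by
  obtain ⟨_, x, -⟩ := hM.nonempty
  have : Nonempty X := ⟨x⟩
  simp_rw [hf.eLpNorm_top_eq_iSup_enorm, Real.enorm_of_nonneg (hf0 _), ← hM.ciSup_eq]
  exact (ENNReal.ofReal_mono.map_ciSup_of_continuousAt
    ENNReal.continuous_ofReal.continuousAt hM.bddAbove).symm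

theorem rpow_le_rpow_self_mul_one_add {q t : ℝ} (hq0 : 0 ≤ q) (hq1 : q ≤ 1) (ht : 0 ≤ t) :
    t ^ q ≤ q ^ q * (1 - q) ^ (1 - q) * (1 + t) := by
  rcases hq0.eq_or_lt with rfl | hq0
  · simpa using ht
  rcases hq1.eq_or_lt with rfl | hq1
  · simp
  have h1q : 0 < 1 - q := by linarith
  have amgm := geom_mean_le_arith_mean2_weighted hq0.le h1q.le (div_nonneg ht hq0.le)
    (one_div_nonneg.2 h1q.le) (by ring)
  rw [div_rpow ht hq0.le, one_div, inv_rpow h1q.le, mul_div_cancel₀ _ hq0.ne',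
    mul_inv_cancel₀ h1q.ne', ← div_eq_mul_inv, div_div, div_le_iff₀ (by positivity)] at amgm
  linarith

/-- The supremum of `t ^ p / (1 + t) ^ 2` over `t > 0`, for `0 ≤ p ≤ 2`. -/
noncomputable def logisticPeak (p : ℝ) : ℝ := p ^ p * (2 - p) ^ (2 - p) / 4

theorem logisticPeak_two : logisticPeak 2 = 1 := by
  norm_num [logisticPeak]

theorem logisticPeak_two_sub (p : ℝ) : logisticPeak (2 - p) = logisticPeak p := by
  rw [logisticPeak, logisticPeak, sub_sub_cancel, mul_comm]

theorem logisticPeak_two_mul {q : ℝ} (hq0 : 0 ≤ q) (hq1 : q ≤ 1) :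
    logisticPeak (2 * q) = (q ^ q * (1 - q) ^ (1 - q)) ^ 2 := by
  have h1q : 0 ≤ 1 - q := by linarith
  have two_mul_rpow : ∀ r : ℝ, 0 ≤ r → (2 * r) ^ (2 * r) = 2 ^ (2 * r) * (r ^ r) ^ 2 := by
    intro r hr
    rw [mul_rpow zero_le_two hr, mul_comm 2 r, rpow_mul hr, rpow_two]
  have two_rpow : (2 : ℝ) ^ (2 * q) * 2 ^ (2 * (1 - q)) = 4 := by
    rw [← rpow_add zero_lt_two, show 2 * q + 2 * (1 - q) = 2 by ring]
    norm_num
  rw [logisticPeak, show 2 - 2 * q = 2 * (1 - q) by ring, two_mul_rpow q hq0,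
    two_mul_rpow (1 - q) h1q]
  linear_combination (q ^ q * (1 - q) ^ (1 - q)) ^ 2 / 4 * two_rpow

theorem rpow_div_one_add_sq_le_logisticPeak {p t : ℝ} (hp0 : 0 ≤ p) (hp2 : p ≤ 2) (ht : 0 ≤ t) :
    t ^ p / (1 + t) ^ 2 ≤ logisticPeak p := by
  obtain ⟨q, rfl⟩ : ∃ q, p = 2 * q := ⟨p / 2, by ring⟩
  rw [logisticPeak_two_mul (by linarith) (by linarith), div_le_iff₀ (by positivity), mul_comm 2 q,
    rpow_mul ht, rpow_two, ← mul_pow]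
  exact pow_le_pow_left₀ (rpow_nonneg ht q)
    (rpow_le_rpow_self_mul_one_add (by linarith) (by linarith) ht) 2

theorem logisticPeak_eq_div_one_add_sq {p : ℝ} (hp0 : 0 < p) (hp2 : p < 2) :
    (p / (2 - p)) ^ p / (1 + p / (2 - p)) ^ 2 = logisticPeak p := by
  have h2p : 0 < 2 - p := by linarith
  rw [logisticPeak, div_rpow hp0.le h2p.le, rpow_sub h2p, rpow_two]
  have : 0 < (2 - p) ^ p := rpow_pos_of_pos h2p p
  field_simp
  ring

/-- The logistic density `ϱ` with scale `1/λ`, multiplied by `e^{s|x|}`. -/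
noncomputable def tiltedLogistic (lam s x : ℝ) : ℝ :=
  lam * exp (lam * x + s * |x|) / (1 + exp (lam * x)) ^ 2

section tiltedLogistic

variable {lam s : ℝ}

theorem tiltedLogistic_nonneg (hlam : 0 ≤ lam) (s x : ℝ) : 0 ≤ tiltedLogistic lam s x := by
  unfold tiltedLogistic
  positivity

theorem continuous_tiltedLogistic (lam s : ℝ) : Continuous (tiltedLogistic lam s) :=
  .div (by fun_prop) (by fun_prop) fun x => by positivity

theorem tiltedLogistic_of_nonneg (hlam : lam ≠ 0) {x : ℝ} (hx : 0 ≤ x) :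
    tiltedLogistic lam s x = lam * (exp (lam * x) ^ (1 + s / lam) / (1 + exp (lam * x)) ^ 2) := by
  rw [tiltedLogistic, ← exp_mul, abs_of_nonneg hx, mul_div_assoc]
  congr 4
  field_simp

theorem tiltedLogistic_of_nonpos (hlam : lam ≠ 0) {x : ℝ} (hx : x ≤ 0) :
    tiltedLogistic lam s x = lam * (exp (lam * x) ^ (1 - s / lam) / (1 + exp (lam * x)) ^ 2) := by
  rw [tiltedLogistic, ← exp_mul, abs_of_nonpos hx, mul_div_assoc]
  congr 4
  field_simp
  ring

theorem tiltedLogistic_le (hlam : 0 < lam) (hs0 : 0 ≤ s) (hs : s ≤ lam) (x : ℝ) :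
    tiltedLogistic lam s x ≤ lam * logisticPeak (1 + s / lam) := by
  have hc0 : 0 ≤ s / lam := div_nonneg hs0 hlam.le
  have hc1 : s / lam ≤ 1 := (div_le_one hlam).2 hs
  rcases le_total 0 x with hx | hx
  · rw [tiltedLogistic_of_nonneg hlam.ne' hx]
    gcongr
    exact rpow_div_one_add_sq_le_logisticPeak (by linarith) (by linarith) (exp_pos _).le
  · rw [tiltedLogistic_of_nonpos hlam.ne' hx, ← logisticPeak_two_sub,
      show 2 - (1 + s / lam) = 1 - s / lam by ring]
    gcongr
    exact rpow_div_one_add_sq_le_logisticPeak (by linarith) (by linarith) (exp_pos _).le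

theorem tiltedLogistic_eq_lam_mul_logisticPeak (hlam : 0 < lam) (hs0 : 0 ≤ s) (hs : s < lam) :
    tiltedLogistic lam s (log ((1 + s / lam) / (1 - s / lam)) / lam)
      = lam * logisticPeak (1 + s / lam) := by
  have hc0 : 0 ≤ s / lam := div_nonneg hs0 hlam.le
  have hc1 : s / lam < 1 := (div_lt_one hlam).2 hs
  have ht : 1 ≤ (1 + s / lam) / (1 - s / lam) := by
    rw [one_le_div (by linarith)]
    linarith
  have hexp : exp (lam * (log ((1 + s / lam) / (1 - s / lam)) / lam))
      = (1 + s / lam) / (2 - (1 + s / lam)) := by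
    rw [mul_div_cancel₀ _ hlam.ne', exp_log (by linarith),
      show 2 - (1 + s / lam) = 1 - s / lam by ring]
  rw [tiltedLogistic_of_nonneg hlam.ne' (div_nonneg (log_nonneg ht) hlam.le), hexp,
    logisticPeak_eq_div_one_add_sq (by linarith) (by linarith)]

theorem tendsto_tiltedLogistic_self (hlam : 0 < lam) :
    Tendsto (tiltedLogistic lam lam) atTop (𝓝 lam) := by
  have hexp : Tendsto (fun x => exp (-(lam * x))) atTop (𝓝 0) :=
    tendsto_exp_atBot.comp (tendsto_neg_atTop_atBot.comp (tendsto_id.const_mul_atTop hlam))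
  have hlim : Tendsto (fun x => lam / (exp (-(lam * x)) + 1) ^ 2) atTop (𝓝 (lam / (0 + 1) ^ 2)) :=
    tendsto_const_nhds.div ((hexp.add_const 1).pow 2) (by norm_num)
  rw [zero_add, one_pow, div_one] at hlim
  refine hlim.congr' ((eventually_ge_atTop 0).mono fun x hx => ?_)
  rw [tiltedLogistic, abs_of_nonneg hx, exp_add, exp_neg]
  field_simp

theorem isLUB_range_tiltedLogistic (hlam : 0 < lam) (hs0 : 0 ≤ s) (hs : s ≤ lam) :
    IsLUB (range (tiltedLogistic lam s)) (lam * logisticPeak (1 + s / lam)) := by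
  refine isLUB_of_mem_closure (forall_mem_range.2 (tiltedLogistic_le hlam hs0 hs)) ?_
  rcases hs.lt_or_eq with hs | rfl
  · exact subset_closure ⟨_, tiltedLogistic_eq_lam_mul_logisticPeak hlam hs0 hs⟩
  · rw [div_self hlam.ne', one_add_one_eq_two, logisticPeak_two, mul_one]
    exact mem_closure_of_tendsto (tendsto_tiltedLogistic_self hlam) (.of_forall mem_range_self)

end tiltedLogistic

/-- For the logistic-over-exponential weight
`ω(x) = λ e^{λx + b|x|}/(1 + e^{λx})²` and `κ_a(x) = e^{−a|x|}` with `0 < a`, `0 ≤ b`,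
`a + b ≤ λ`, one has
`‖ω/κ_a‖_{L_∞(ℝ)} = (λ/4)(1 + (a+b)/λ)^{1+(a+b)/λ}(1 − (a+b)/λ)^{1−(a+b)/λ}`
(real powers, so the convention `0⁰ = 1` holds); in particular the value is `λ` when
`a + b = λ`. -/
theorem stmt_17 (lam b a : ℝ) (hlam : 0 < lam) (hb : 0 ≤ b) (ha : 0 < a)
    (hab : a + b ≤ lam) (ω κ : ℝ → ℝ)
    (hω : ω = fun x : ℝ =>
      lam * Real.exp (lam * x + b * |x|) / (1 + Real.exp (lam * x)) ^ 2)
    (hκ : κ = fun x : ℝ => Real.exp (-(a * |x|))) :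
    eLpNorm (fun x => ω x / κ x) ⊤ volume
      = ENNReal.ofReal
          (lam / 4 * (1 + (a + b) / lam) ^ (1 + (a + b) / lam)
            * (1 - (a + b) / lam) ^ (1 - (a + b) / lam))
    ∧ (a + b = lam → eLpNorm (fun x => ω x / κ x) ⊤ volume = ENNReal.ofReal lam) := by
  have hquot : (fun x => ω x / κ x) = tiltedLogistic lam (a + b) := by
    funext x
    rw [hω, hκ, tiltedLogistic]
    dsimp only
    rw [exp_neg, div_inv_eq_mul, div_mul_eq_mul_div, mul_assoc, ← exp_add]
    ring_nf
  have hnorm : eLpNorm (fun x => ω x / κ x) ⊤ volume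
      = ENNReal.ofReal (lam * logisticPeak (1 + (a + b) / lam)) := by
    rw [hquot]
    exact (continuous_tiltedLogistic lam _).eLpNorm_top_eq_ofReal_of_isLUB
      (tiltedLogistic_nonneg hlam.le _) (isLUB_range_tiltedLogistic hlam (by positivity) hab)
  refine ⟨hnorm.trans ?_, fun hsum => hnorm.trans ?_⟩
  · rw [logisticPeak, show 2 - (1 + (a + b) / lam) = 1 - (a + b) / lam by ring]
    ring_nf
  · rw [hsum, div_self hlam.ne', one_add_one_eq_two, logisticPeak_two, mul_one]
end

section
/- Let λ > 0, b ≥ 0, α ≥ 1, and let ω(x) = λ e^{λx + b|x|}/(1 + e^{λx})² for x ∈ ℝ. Then ‖ω^{1/α}‖_{L_1(ℝ)}^α = λ·(2∫_0^∞ e^{(λ+b)x/α}/(1 + e^{λx})^{2/α} dx)^α ≥ λ·(α/λ)^α (where the value may be +∞). -/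
/-!
The weight is even, so `∫ ω^{1/α} = 2 λ^{1/α} ∫₀^∞ e^{(λ+b)x/α} / (1 + e^{λx})^{2/α} dx`, which
is the identity. For the bound, subadditivity of `t ↦ t^{1/α}` gives
`(1 + e^{λx})^{1/α} ≤ 1 + e^{λx/α}`, so on `x ≥ 0` the integrand dominates the logistic density
`e^{cx} / (1 + e^{cx})²` with `c = λ/α`, whose integral over `(0, ∞)` is `1/(2c) = α/(2λ)`.
-/

open MeasureTheory Real Set Filter
open scoped ENNReal Topology

theorem lintegral_comp_abs (f : ℝ → ℝ≥0∞) :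
    ∫⁻ x, f |x| = 2 * ∫⁻ x in Ioi 0, f x := by
  have h_pos : ∫⁻ x in Ioi 0, f |x| = ∫⁻ x in Ioi 0, f x :=
    setLIntegral_congr_fun measurableSet_Ioi fun x hx => by rw [abs_of_pos hx]
  have h_neg : ∫⁻ x in Iic 0, f |x| = ∫⁻ x in Ioi 0, f x := by
    have := (Measure.measurePreserving_neg (volume : Measure ℝ)).setLIntegral_comp_preimage_emb
      (Homeomorph.neg ℝ).measurableEmbedding (fun x => f |x|) (Ici 0)
    simp only [abs_neg, neg_preimage, neg_Ici, neg_zero] at this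
    rw [this, ← setLIntegral_congr Ioi_ae_eq_Ici, h_pos]
  rw [← lintegral_add_compl _ measurableSet_Ioi, compl_Ioi, h_pos, h_neg, two_mul]

theorem hasDerivAt_neg_inv_mul_one_add_exp {c : ℝ} (hc : c ≠ 0) (x : ℝ) :
    HasDerivAt (fun x => -(c * (1 + exp (c * x)))⁻¹) (exp (c * x) / (1 + exp (c * x)) ^ 2) x := by
  have h_inner : HasDerivAt (fun x => c * (1 + exp (c * x))) (c * (exp (c * x) * c)) x :=
    (((hasDerivAt_id x).const_mul c).exp.const_add 1).const_mul c |>.congr_deriv (by simp)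
  refine (h_inner.inv (by positivity)).neg.congr_deriv ?_
  field_simp

theorem lintegral_Ioi_logistic {c : ℝ} (hc : 0 < c) :
    ∫⁻ x in Ioi 0, ENNReal.ofReal (exp (c * x) / (1 + exp (c * x)) ^ 2)
      = ENNReal.ofReal (1 / (2 * c)) := by
  have h_deriv (x) (_ : x ∈ Ici (0 : ℝ)) := hasDerivAt_neg_inv_mul_one_add_exp hc.ne' x
  have h_nonneg (x) (_ : x ∈ Ioi (0 : ℝ)) : 0 ≤ exp (c * x) / (1 + exp (c * x)) ^ 2 := by
    positivity
  have h_lim : Tendsto (fun x => -(c * (1 + exp (c * x)))⁻¹) atTop (𝓝 0) := by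
    simpa using (tendsto_atTop_add_const_left _ 1 (tendsto_exp_atTop.comp
      (tendsto_id.const_mul_atTop hc))).const_mul_atTop hc |>.inv_tendsto_atTop |>.neg
  rw [← ofReal_integral_eq_lintegral_ofReal (integrableOn_Ioi_deriv_of_nonneg' h_deriv h_nonneg h_lim)
    ((ae_restrict_iff' measurableSet_Ioi).2 (ae_of_all _ h_nonneg)),
    integral_Ioi_of_hasDerivAt_of_nonneg' h_deriv h_nonneg h_lim]
  congr 1
  norm_num
  ring

theorem exp_add_mul_abs_div_one_add_exp_sq (a b x : ℝ) :
    exp (a * x + b * |x|) / (1 + exp (a * x)) ^ 2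
      = exp ((a + b) * |x|) / (1 + exp (a * |x|)) ^ 2 := by
  rcases le_or_gt 0 x with hx | hx
  · rw [abs_of_nonneg hx, add_mul]
  · rw [abs_of_neg hx]
    have h_num : exp (a * x + b * -x) = exp ((a + b) * -x) * exp (a * x) ^ 2 := by
      rw [sq, ← exp_add, ← exp_add]; ring_nf
    have h_den : 1 + exp (a * x) = (1 + exp (a * -x)) * exp (a * x) := by
      rw [add_mul, ← exp_add]; ring_nf; rw [exp_zero, add_comm]
    rw [h_num, h_den, mul_pow, mul_div_mul_right _ _ (by positivity)]

theorem mul_exp_div_one_add_exp_sq_rpow {c : ℝ} (hc : 0 ≤ c) (t s p : ℝ) :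
    (c * exp t / (1 + exp s) ^ 2) ^ p = c ^ p * (exp (t * p) / (1 + exp s) ^ (2 * p)) := by
  rw [div_rpow (by positivity) (by positivity), mul_rpow hc (exp_pos t).le, ← exp_mul,
    ← rpow_natCast, ← rpow_mul (by positivity), mul_div_assoc, Nat.cast_ofNat]

theorem one_add_rpow_two_div_le {A α : ℝ} (hA : 0 ≤ A) (hα : 1 ≤ α) :
    (1 + A) ^ (2 / α) ≤ (1 + A ^ (1 / α)) ^ 2 := by
  have h_sub : (1 + A) ^ (1 / α) ≤ 1 + A ^ (1 / α) := by
    simpa using rpow_add_le_add_rpow zero_le_one hA (by positivity)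
      ((div_le_one (by positivity)).2 hα)
  calc (1 + A) ^ (2 / α) = ((1 + A) ^ (1 / α)) ^ 2 := by
        rw [← rpow_natCast, ← rpow_mul (by positivity)]; ring_nf
    _ ≤ (1 + A ^ (1 / α)) ^ 2 := by gcongr

theorem logistic_le_exp_div_one_add_exp_rpow {a b α x : ℝ} (hb : 0 ≤ b) (hα : 1 ≤ α)
    (hx : 0 ≤ x) :
    exp (a / α * x) / (1 + exp (a / α * x)) ^ 2
      ≤ exp ((a + b) * x / α) / (1 + exp (a * x)) ^ (2 / α) := by
  have h_exp : exp (a * x) ^ (1 / α) = exp (a / α * x) := by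
    rw [← exp_mul]; ring_nf
  have h_num : a / α * x ≤ (a + b) * x / α := by
    rw [div_mul_eq_mul_div, add_mul]; gcongr; nlinarith
  gcongr
  exact h_exp ▸ one_add_rpow_two_div_le (exp_pos (a * x)).le hα

theorem ofReal_div_le_two_mul_lintegral_Ioi {lam b α : ℝ} (hlam : 0 < lam) (hb : 0 ≤ b)
    (hα : 1 ≤ α) :
    ENNReal.ofReal (α / lam) ≤ 2 * ∫⁻ x in Ioi 0,
      ENNReal.ofReal (exp ((lam + b) * x / α) / (1 + exp (lam * x)) ^ (2 / α)) := by
  calc ENNReal.ofReal (α / lam)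
      = 2 * ∫⁻ x in Ioi 0, ENNReal.ofReal (exp (lam / α * x) / (1 + exp (lam / α * x)) ^ 2) := by
        rw [lintegral_Ioi_logistic (by positivity), ← ENNReal.ofReal_ofNat 2,
          ← ENNReal.ofReal_mul zero_le_two]
        congr 1; field_simp
    _ ≤ _ := by
        gcongr 2 * ?_
        exact setLIntegral_mono' measurableSet_Ioi fun x hx => ENNReal.ofReal_le_ofReal
          (logistic_le_exp_div_one_add_exp_rpow hb hα hx.le)

/-- For `λ > 0`, `b ≥ 0`, `α ≥ 1` and the weight
`ω(x) = λ e^{λx + b|x|}/(1 + e^{λx})²` on `ℝ` one has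
`‖ω^{1/α}‖_{L₁(ℝ)}^α = λ (2∫₀^∞ e^{(λ+b)x/α}/(1 + e^{λx})^{2/α} dx)^α ≥ λ (α/λ)^α`,
where the value may be `+∞` (so the computation is carried out in `ℝ≥0∞`). -/
theorem stmt_18 (lam b α : ℝ) (hlam : 0 < lam) (hb : 0 ≤ b) (hα : 1 ≤ α)
    (ω : ℝ → ℝ)
    (hω : ω = fun x : ℝ =>
      lam * Real.exp (lam * x + b * |x|) / (1 + Real.exp (lam * x)) ^ 2) :
    (∫⁻ x : ℝ, ENNReal.ofReal (ω x ^ (1 / α))) ^ α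
      = ENNReal.ofReal lam
          * (2 * ∫⁻ x in Set.Ioi (0:ℝ),
              ENNReal.ofReal
                (Real.exp ((lam + b) * x / α) / (1 + Real.exp (lam * x)) ^ (2 / α))) ^ α
    ∧ ENNReal.ofReal (lam * (α / lam) ^ α)
        ≤ (∫⁻ x : ℝ, ENNReal.ofReal (ω x ^ (1 / α))) ^ α := by
  subst hω
  have hα0 : 0 < α := by positivity
  set φ : ℝ → ℝ := fun x => exp ((lam + b) * x / α) / (1 + exp (lam * x)) ^ (2 / α)
  have h_even (x : ℝ) : ENNReal.ofReal
      ((lam * exp (lam * x + b * |x|) / (1 + exp (lam * x)) ^ 2) ^ (1 / α))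
        = ENNReal.ofReal (lam ^ (1 / α)) * ENNReal.ofReal (φ |x|) := by
    rw [mul_div_assoc, exp_add_mul_abs_div_one_add_exp_sq, ← mul_div_assoc,
      mul_exp_div_one_add_exp_sq_rpow hlam.le, ENNReal.ofReal_mul (by positivity)]
    simp only [φ, mul_one_div]
  have h_lintegral : ∫⁻ x, ENNReal.ofReal
      ((lam * exp (lam * x + b * |x|) / (1 + exp (lam * x)) ^ 2) ^ (1 / α))
        = ENNReal.ofReal (lam ^ (1 / α)) * (2 * ∫⁻ x in Ioi 0, ENNReal.ofReal (φ x)) := by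
    simp_rw [h_even]
    rw [lintegral_const_mul' _ _ ENNReal.ofReal_ne_top,
      lintegral_comp_abs fun x => ENNReal.ofReal (φ x)]
  have h_const : ENNReal.ofReal (lam ^ (1 / α)) ^ α = ENNReal.ofReal lam := by
    rw [ENNReal.ofReal_rpow_of_pos (by positivity), ← rpow_mul hlam.le,
      one_div_mul_cancel hα0.ne', rpow_one]
  rw [h_lintegral, ENNReal.mul_rpow_of_nonneg _ _ hα0.le, h_const]
  refine ⟨rfl, ?_⟩
  rw [ENNReal.ofReal_mul hlam.le, ← ENNReal.ofReal_rpow_of_pos (by positivity)]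
  gcongr
  exact ofReal_div_le_two_mul_lintegral_Ioi hlam hb hα
end
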